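/- Consider the 2-SEP: configurations are η : ZMod N → {0,1,2} and the jump rates are c_{x,y}(η) = χ⁺(η(x)) χ⁻(η(y)) for nearest-neighbour ordered pairs (x,y), where χ⁺(a) = 1 if a > 0 and 0 otherwise, and χ⁻(a) = 1 if a < 2 and 0 otherwise. Let D⁺_η(x,x+1) = 1 if η(x) = 2 and η(x+1) = 1 (0 otherwise), D⁻_η(x,x+1) = 1 if η(x) = 1 and η(x+1) = 2 (0 otherwise), and D_η = D⁺_η − D⁻_η. Then: (i) the instantaneous current j_η(x,x+1) := c_{x,x+1}(η) − c_{x+1,x}(η) satisfies j_η(x,x+1) = χ⁺(η(x)) − χ⁺(η(x+1)) + D_η(x,x+1) for every η and x; (ii) with h(η) := −χ⁺(η(0)) + ∑_{x=1}^{N−1} (x/N) D_η(x̄, x̄+1) and C(η) := (1/N) ∑_{x ∈ ZMod N} D_η(x, x+1), one has j_η(x,x+1) = τ_{x+1}h(η) − τ_x h(η) + C(η) for every η and every x ∈ ZMod N. -/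

import Mathlib

/-!
Part (i) is a check over the nine values of `(η x, η (x + 1))`. For part (ii), Abel summation
shows that on the discrete circle `ZMod N` any function `g` of the bonds differs from its mean
by a discrete gradient: `g 0 - (1/N) ∑ g = ∑_{k=1}^{N-1} (k/N) (g (k+1) - g k)`. Applied to the
translates of `D_η`, this turns the remainder `D_η(x, x+1) - C(η)` left by (i) into
`τ_{x+1}h - τ_x h` up to the `χ⁺` terms, which are a gradient already.
-/

open Finset

theorem sum_Icc_natCast_mul_sub {R : Type*} [CommRing R] (f : ℕ → R) (n : ℕ) :
    ∑ k ∈ Icc 1 n, (k : R) * (f (k + 1) - f k) =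
      n * f (n + 1) + f 0 - ∑ k ∈ range (n + 1), f k := by
  induction n with
  | zero => simp
  | succ n ih =>
    rw [sum_Icc_succ_top (by omega), ih, sum_range_succ _ (n + 1)]
    push_cast
    ring

theorem ZMod.sum_univ_eq_sum_range {M : Type*} [AddCommMonoid M] (n : ℕ) (g : ZMod (n + 1) → M) :
    ∑ y, g y = ∑ k ∈ range (n + 1), g k := by
  rw [← Fin.sum_univ_eq_sum_range (fun k => g k)]
  exact Fintype.sum_congr _ _ fun i : Fin (n + 1) => congrArg g (Fin.cast_val_eq_self i).symm

theorem ZMod.sum_Icc_div_mul_sub {K : Type*} [Field K] [CharZero K] {N : ℕ} [NeZero N]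
    (g : ZMod N → K) :
    ∑ k ∈ Icc 1 (N - 1), ((k : K) / N) * (g (k + 1) - g k) = g 0 - (1 / N) * ∑ y, g y := by
  obtain ⟨n, rfl⟩ : ∃ n, N = n + 1 := Nat.exists_eq_succ_of_ne_zero (NeZero.ne N)
  have abel := sum_Icc_natCast_mul_sub (fun k => g k) n
  simp only [Nat.cast_zero, Nat.cast_succ, ZMod.natCast_self'] at abel
  simp_rw [div_mul_eq_mul_div, ← sum_div, add_tsub_cancel_right, abel, ZMod.sum_univ_eq_sum_range]
  field_simp
  push_cast
  ring

def chiPlus (a : Fin 3) : ℝ := if 0 < (a : ℕ) then 1 else 0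

def chiMinus (a : Fin 3) : ℝ := if (a : ℕ) < 2 then 1 else 0

def bondDefect (a b : Fin 3) : ℝ :=
  (if (a : ℕ) = 2 ∧ (b : ℕ) = 1 then 1 else 0) - (if (a : ℕ) = 1 ∧ (b : ℕ) = 2 then 1 else 0)

theorem chiPlus_mul_chiMinus_sub (a b : Fin 3) :
    chiPlus a * chiMinus b - chiPlus b * chiMinus a = chiPlus a - chiPlus b + bondDefect a b := by
  fin_cases a <;> fin_cases b <;> norm_num [chiPlus, chiMinus, bondDefect]

theorem stmt_6_general {N : ℕ} [NeZero N] :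
    let χp : Fin 3 → ℝ := fun a => if 0 < (a : ℕ) then 1 else 0
    let χm : Fin 3 → ℝ := fun a => if (a : ℕ) < 2 then 1 else 0
    let D : (ZMod N → Fin 3) → ZMod N → ℝ := fun η x =>
      (if (η x : ℕ) = 2 ∧ (η (x + 1) : ℕ) = 1 then (1 : ℝ) else 0)
        - (if (η x : ℕ) = 1 ∧ (η (x + 1) : ℕ) = 2 then (1 : ℝ) else 0)
    let j : (ZMod N → Fin 3) → ZMod N → ℝ := fun η x =>
      χp (η x) * χm (η (x + 1)) - χp (η (x + 1)) * χm (η x)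
    let h : (ZMod N → Fin 3) → ℝ := fun η =>
      -χp (η 0) + ∑ k ∈ Finset.Icc 1 (N - 1), ((k : ℝ) / N) * D η (k : ZMod N)
    let C : (ZMod N → Fin 3) → ℝ := fun η => (1 / (N : ℝ)) * ∑ x : ZMod N, D η x
    (∀ (η : ZMod N → Fin 3) (x : ZMod N),
      j η x = χp (η x) - χp (η (x + 1)) + D η x) ∧
    (∀ (η : ZMod N → Fin 3) (x : ZMod N),
      j η x = h (fun w => η (w + (x + 1))) - h (fun w => η (w + x)) + C η) := by
  intro χp χm D j h C
  have current (η : ZMod N → Fin 3) (x : ZMod N) : j η x = χp (η x) - χp (η (x + 1)) + D η x :=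
    chiPlus_mul_chiMinus_sub (η x) (η (x + 1))
  refine ⟨current, fun η x => ?_⟩
  have D_translate (z y : ZMod N) : D (fun w => η (w + z)) y = D η (y + z) := by
    simp only [D, add_right_comm y 1 z]
  have hodge := ZMod.sum_Icc_div_mul_sub fun y => D η (y + x)
  rw [Fintype.sum_equiv (Equiv.addRight x) (fun y => D η (y + x)) _ fun _ => rfl] at hodge
  simp only [add_right_comm _ 1 x, zero_add, mul_sub, sum_sub_distrib] at hodge
  simp only [h, C, current, D_translate, zero_add]
  simp only [← add_assoc]
  linarith

/-- **The 2-SEP and the Hodge decomposition of its current.** Configurations are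
`η : ZMod N → {0,1,2}` and the jump rates are `c_{x,y}(η) = χ⁺(η(x)) χ⁻(η(y))`,
where `χ⁺(a) = 1` iff `a > 0` and `χ⁻(a) = 1` iff `a < 2`. With
`D⁺_η(x,x+1) = 1` iff `η(x) = 2 ∧ η(x+1) = 1`, `D⁻_η(x,x+1) = 1` iff
`η(x) = 1 ∧ η(x+1) = 2`, and `D = D⁺ - D⁻`:
(i) the instantaneous current `j_η(x,x+1) = c_{x,x+1}(η) - c_{x+1,x}(η)` equals
`χ⁺(η(x)) - χ⁺(η(x+1)) + D_η(x,x+1)`;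
(ii) with `h(η) := -χ⁺(η(0)) + ∑_{x=1}^{N-1} (x/N) D_η(x̄,x̄+1)` and
`C(η) := (1/N) ∑_x D_η(x,x+1)` one has
`j_η(x,x+1) = τ_{x+1}h(η) - τ_x h(η) + C(η)` (with `τ_x f (η) = f (fun w => η (w + x))`). -/
theorem stmt_6 {N : ℕ} [NeZero N] (hN : 2 ≤ N) :
    let χp : Fin 3 → ℝ := fun a => if 0 < (a : ℕ) then 1 else 0
    let χm : Fin 3 → ℝ := fun a => if (a : ℕ) < 2 then 1 else 0
    let D : (ZMod N → Fin 3) → ZMod N → ℝ := fun η x =>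
      (if (η x : ℕ) = 2 ∧ (η (x + 1) : ℕ) = 1 then (1 : ℝ) else 0)
        - (if (η x : ℕ) = 1 ∧ (η (x + 1) : ℕ) = 2 then (1 : ℝ) else 0)
    let j : (ZMod N → Fin 3) → ZMod N → ℝ := fun η x =>
      χp (η x) * χm (η (x + 1)) - χp (η (x + 1)) * χm (η x)
    let h : (ZMod N → Fin 3) → ℝ := fun η =>
      -χp (η 0) + ∑ k ∈ Finset.Icc 1 (N - 1), ((k : ℝ) / N) * D η (k : ZMod N)
    let C : (ZMod N → Fin 3) → ℝ := fun η => (1 / (N : ℝ)) * ∑ x : ZMod N, D η x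
    (∀ (η : ZMod N → Fin 3) (x : ZMod N),
      j η x = χp (η x) - χp (η (x + 1)) + D η x) ∧
    (∀ (η : ZMod N → Fin 3) (x : ZMod N),
      j η x = h (fun w => η (w + (x + 1))) - h (fun w => η (w + x)) + C η) :=
  stmt_6_general
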